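/- arXiv:1407.0793 — 3 statements merged into one kernel-verified Lean document; each statement's English description precedes it below -/
import Mathlib

section
/- Let n, k be positive integers with gcd(n, n−k) = 1 and let 1 ≤ i ≤ min{k+1, n−k−1}. Then the digraph D_{k,i} is primitive and for every 1 ≤ m ≤ n its m-th smallest local exponent is attained at v_m and equals exp_{D_{k,i}}(m) = exp_{D_{k,i}}(v_m) = (n−2)(n−k) + 1 − i + m. -/
/-- `f : ℕ → V` traces a directed walk of length `t` in the digraph with
adjacency relation `A` if consecutive vertices are joined by arcs. -/
def IsWalk {V : Type*} (A : V → V → Prop) (t : ℕ) (f : ℕ → V) : Prop :=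
  ∀ i < t, A (f i) (f (i + 1))

/-- There is a directed walk of length `t` from `u` to `v`. -/
def HasWalk {V : Type*} (A : V → V → Prop) (t : ℕ) (u v : V) : Prop :=
  ∃ f : ℕ → V, f 0 = u ∧ f t = v ∧ IsWalk A t f

/-- A digraph is strongly connected if every vertex can reach every vertex. -/
def StronglyConnected {V : Type*} (A : V → V → Prop) : Prop :=
  ∀ u v : V, ∃ t : ℕ, HasWalk A t u v

/-- A digraph is primitive if it is strongly connected and for some `t > 0`
there are directed walks of length `t` between every ordered pair of vertices. -/
def IsPrimitive {V : Type*} (A : V → V → Prop) : Prop :=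
  StronglyConnected A ∧ ∃ t : ℕ, 0 < t ∧ ∀ u v : V, HasWalk A t u v

/-- The local exponent at `u`: the least `l` such that for every `t ≥ l` and
every vertex `v` there is a directed walk of length `t` from `u` to `v`. -/
noncomputable def localExp {V : Type*} (A : V → V → Prop) (u : V) : ℕ :=
  sInf {l : ℕ | ∀ t ≥ l, ∀ v : V, HasWalk A t u v}

/-- `kthSmallest f k` is the `k`-th smallest element (1-indexed) of the
multiset of values of `f`. -/
noncomputable def kthSmallest {n : ℕ} (f : Fin n → ℕ) (k : ℕ) : ℕ :=
  (Multiset.sort (Finset.univ.val.map f) (· ≤ ·)).getD (k - 1) 0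

/-- A directed cycle of length `c` (a closed walk whose first `c` vertices are
pairwise distinct), given by its vertex function. -/
def IsCycle {V : Type*} (A : V → V → Prop) (c : ℕ) (f : ℕ → V) : Prop :=
  IsWalk A c f ∧ f c = f 0 ∧ ∀ i < c, ∀ j < c, f i = f j → i = j

/-- A signed digraph: each arc carries a sign `+1` or `-1`. -/
structure SignedDigraph (V : Type*) where
  Adj : V → V → Prop
  sgn : V → V → ℤ
  sgn_unit : ∀ u v : V, Adj u v → sgn u v = 1 ∨ sgn u v = -1

namespace SignedDigraph

variable {V : Type*} (S : SignedDigraph V)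

/-- The sign of the walk of length `t` traced by `f`. -/
def walkSign (t : ℕ) (f : ℕ → V) : ℤ :=
  ∏ i ∈ Finset.range t, S.sgn (f i) (f (i + 1))

/-- There is a pair of SSSD walks of length `t` from `u` to `v`: two walks with
the same endpoints and the same length but different signs. -/
def HasSSSD (t : ℕ) (u v : V) : Prop :=
  ∃ f g : ℕ → V,
    (f 0 = u ∧ f t = v ∧ IsWalk S.Adj t f) ∧
    (g 0 = u ∧ g t = v ∧ IsWalk S.Adj t g) ∧
    S.walkSign t f ≠ S.walkSign t g

/-- A signed digraph is primitive and nonpowerful if from some length on there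
are SSSD walk pairs between all ordered pairs of vertices. -/
def IsPrimitiveNonpowerful : Prop :=
  ∃ l : ℕ, 0 < l ∧ ∀ t ≥ l, ∀ u v : V, S.HasSSSD t u v

/-- The local base at vertex `u`: the least `l` such that for every `t ≥ l` and
every vertex `v` there is a pair of SSSD walks of length `t` from `u` to `v`. -/
noncomputable def localBase (u : V) : ℕ :=
  sInf {l : ℕ | ∀ t ≥ l, ∀ v : V, S.HasSSSD t u v}

/-- All directed cycles of length `c` in `S` have the same sign. -/
def SameSignCycles (c : ℕ) : Prop :=
  ∀ f g : ℕ → V, IsCycle S.Adj c f → IsCycle S.Adj c g →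
    S.walkSign c f = S.walkSign c g

end SignedDigraph

/-- Isomorphism of digraphs. -/
def DigraphIso {V W : Type*} (A : V → V → Prop) (B : W → W → Prop) : Prop :=
  ∃ e : V ≃ W, ∀ u v : V, A u v ↔ B (e u) (e v)

/-- The Hamilton cycle `Cₙ` on `v₁,…,vₙ` (here `vⱼ` is the vertex with 0-based
index `j-1`), with arcs `v₁ → vₙ` and `vⱼ → v_{j-1}` for `2 ≤ j ≤ n`. -/
def CnAdj (n : ℕ) : Fin n → Fin n → Prop := fun a b =>
  (a.val = 0 ∧ b.val = n - 1) ∨ a.val = b.val + 1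

/-- The digraph `D_{k,i}`: the Hamilton cycle `Cₙ` together with the arcs
`vⱼ → v_{n-k+j-1}` for `1 ≤ j ≤ i`. -/
def DkiAdj (n k i : ℕ) : Fin n → Fin n → Prop := fun a b =>
  CnAdj n a b ∨ ∃ j : ℕ, 1 ≤ j ∧ j ≤ i ∧ a.val = j - 1 ∧ b.val = n - k + j - 2

/-- The digraph `𝓛`: `Cₙ` together with the arcs `v₁ → v_{n-2}` and `v₃ → vₙ`. -/
def LAdj (n : ℕ) : Fin n → Fin n → Prop := fun a b =>
  CnAdj n a b ∨ (a.val = 0 ∧ b.val = n - 3) ∨ (a.val = 2 ∧ b.val = n - 1)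

/-- The digraph `F`: the `(n-1)`-cycle `v₁ → vₙ → v_{n-1} → v_{n-3} → ⋯ → v₂ → v₁`
together with the arcs `v₁ → v_{n-2}` and `v_{n-2} → v_{n-3}`. -/
def FAdj (n : ℕ) : Fin n → Fin n → Prop := fun a b =>
  (a.val = 0 ∧ b.val = n - 1) ∨ (a.val = n - 1 ∧ b.val = n - 2) ∨
  (a.val = n - 2 ∧ b.val = n - 4) ∨ (a.val = b.val + 1 ∧ 1 ≤ a.val ∧ a.val ≤ n - 4) ∨
  (a.val = 0 ∧ b.val = n - 3) ∨ (a.val = n - 3 ∧ b.val = n - 4)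

/-- The digraph `F₁`: the `(n-1)`-cycle `v₁ → v_{n-1} → v_{n-2} → ⋯ → v₂ → v₁`
together with the arcs `v₁ → v_{n-2}`, `v₂ → vₙ` and `vₙ → v_{n-1}`. -/
def F1Adj (n : ℕ) : Fin n → Fin n → Prop := fun a b =>
  (a.val = 0 ∧ b.val = n - 2) ∨ (a.val = b.val + 1 ∧ 1 ≤ a.val ∧ a.val ≤ n - 2) ∨
  (a.val = 0 ∧ b.val = n - 3) ∨ (a.val = 1 ∧ b.val = n - 1) ∨ (a.val = n - 1 ∧ b.val = n - 2)

/-- The digraph `F₂`: the `(n-1)`-cycle `v₁ → vₙ → v_{n-2} → v_{n-3} → ⋯ → v₂ → v₁`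
together with the arcs `v₁ → v_{n-2}`, `vₙ → v_{n-1}` and `v_{n-1} → v_{n-3}`. -/
def F2Adj (n : ℕ) : Fin n → Fin n → Prop := fun a b =>
  (a.val = 0 ∧ b.val = n - 1) ∨ (a.val = n - 1 ∧ b.val = n - 3) ∨
  (a.val = b.val + 1 ∧ 1 ≤ a.val ∧ a.val ≤ n - 3) ∨
  (a.val = 0 ∧ b.val = n - 3) ∨ (a.val = n - 1 ∧ b.val = n - 2) ∨ (a.val = n - 2 ∧ b.val = n - 4)

/-- The digraph `F₃`: the `(n-2)`-cycle `v₁ → v_{n-2} → v_{n-3} → ⋯ → v₂ → v₁`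
together with the arcs `v₁ → v_{n-1}`, `v_{n-1} → v_{n-2}`, `v₁ → vₙ` and `vₙ → v_{n-2}`. -/
def F3Adj (n : ℕ) : Fin n → Fin n → Prop := fun a b =>
  (a.val = 0 ∧ b.val = n - 3) ∨ (a.val = b.val + 1 ∧ 1 ≤ a.val ∧ a.val ≤ n - 3) ∨
  (a.val = 0 ∧ b.val = n - 2) ∨ (a.val = n - 2 ∧ b.val = n - 3) ∨
  (a.val = 0 ∧ b.val = n - 1) ∨ (a.val = n - 1 ∧ b.val = n - 3)

/-- The digraph `F₇`: the `(n-1)`-cycle `v₁ → v_{n-1} → v_{n-2} → ⋯ → v₂ → v₁`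
together with the arcs `v₁ → v_{n-2}`, `v₃ → vₙ` and `vₙ → v_{n-1}`. -/
def F7Adj (n : ℕ) : Fin n → Fin n → Prop := fun a b =>
  (a.val = 0 ∧ b.val = n - 2) ∨ (a.val = b.val + 1 ∧ 1 ≤ a.val ∧ a.val ≤ n - 2) ∨
  (a.val = 0 ∧ b.val = n - 3) ∨ (a.val = 2 ∧ b.val = n - 1) ∨ (a.val = n - 1 ∧ b.val = n - 2)

/-- The digraph `F'ᵢ` (for `2 ≤ i ≤ n-3`): the `(n-1)`-cycle
`v₁ → v_{n-1} → v_{n-2} → ⋯ → v₂ → v₁` together with the arcs `v₁ → v_{n-2}`,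
`v_{i+1} → vₙ` and `vₙ → v_{i-1}`. -/
def FpAdj (n i : ℕ) : Fin n → Fin n → Prop := fun a b =>
  (a.val = 0 ∧ b.val = n - 2) ∨ (a.val = b.val + 1 ∧ 1 ≤ a.val ∧ a.val ≤ n - 2) ∨
  (a.val = 0 ∧ b.val = n - 3) ∨ (a.val = i ∧ b.val = n - 1) ∨ (a.val = n - 1 ∧ b.val = i - 2)

/-- The digraph `𝓑₁`: `Cₙ` together with the arcs `v₁ → v_{n-3}` and `v₃ → v_{n-1}`. -/
def B1Adj (n : ℕ) : Fin n → Fin n → Prop := fun a b =>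
  CnAdj n a b ∨ (a.val = 0 ∧ b.val = n - 4) ∨ (a.val = 2 ∧ b.val = n - 2)

/-- The digraph `𝓑₂`: `Cₙ` together with the arcs `v₁ → v_{n-3}` and `v₄ → vₙ`. -/
def B2Adj (n : ℕ) : Fin n → Fin n → Prop := fun a b =>
  CnAdj n a b ∨ (a.val = 0 ∧ b.val = n - 4) ∨ (a.val = 3 ∧ b.val = n - 1)

/-- The digraph `𝓑₃`: `Cₙ` together with the arcs `v₁ → v_{n-3}`, `v₂ → v_{n-2}`
and `v₄ → vₙ`. -/
def B3Adj (n : ℕ) : Fin n → Fin n → Prop := fun a b =>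
  CnAdj n a b ∨ (a.val = 0 ∧ b.val = n - 4) ∨ (a.val = 1 ∧ b.val = n - 3) ∨
  (a.val = 3 ∧ b.val = n - 1)

/-- The digraph `𝓑₄`: `Cₙ` together with the arcs `v₁ → v_{n-3}`, `v₃ → v_{n-1}`
and `v₄ → vₙ`. -/
def B4Adj (n : ℕ) : Fin n → Fin n → Prop := fun a b =>
  CnAdj n a b ∨ (a.val = 0 ∧ b.val = n - 4) ∨ (a.val = 2 ∧ b.val = n - 2) ∨
  (a.val = 3 ∧ b.val = n - 1)

/-!
Index the vertices by `0, …, n - 1` and call the vertices of index `< i` doors. A cycle arc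
lowers the index by one (modulo `n`), an extra arc leaves a door and raises the index by
`n - k - 1`. Hence along a walk of length `t` ending at `v` after `s` extra arcs, the
quantity `v + t - s (n - k)` never decreases and changes only by multiples of `n`: it starts
at `u` and jumps by `n` at each wrap `v₁ → vₙ`. Since an extra arc leaves a door, this
forces the `(s+1)`-st extra arc to end no earlier than `u + s (n - k) + 2 - i`, and greedy
walks show that this bound (or the trivial bound `s + 1`) is attained. Thus `v` is reachable
in exactly `t` steps iff `v + t ≡ u + s (n - k) (mod n)` for some `s` whose earliest arrival
time is at most `t`. As `n - k` is invertible modulo `n`, every target needs some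
`s ≤ n - 1`, and some target needs `s ≡ n - 1`; so the local exponent at `u` is the
earliest arrival time for `s = n - 1`, namely `(n - 2)(n - k) + 2 - i + u`.
-/

theorem hasWalk_zero {V : Type*} {A : V → V → Prop} {u v : V} :
    HasWalk A 0 u v ↔ u = v := by
  constructor
  · rintro ⟨f, h0, ht, -⟩
    rw [← h0, ht]
  · rintro rfl
    exact ⟨fun _ => u, rfl, rfl, fun i hi => absurd hi (Nat.not_lt_zero i)⟩

theorem hasWalk_succ {V : Type*} {A : V → V → Prop} {t : ℕ} {u v : V} :
    HasWalk A (t + 1) u v ↔ ∃ w, HasWalk A t u w ∧ A w v := by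
  constructor
  · rintro ⟨f, h0, ht, hw⟩
    exact ⟨f t, ⟨f, h0, rfl, fun j hj => hw j (by omega)⟩, ht ▸ hw t (by omega)⟩
  · rintro ⟨w, ⟨f, h0, ht, hw⟩, hA⟩
    refine ⟨fun j => if j ≤ t then f j else v, by simp [h0], by simp, fun j hj => ?_⟩
    rcases Nat.lt_or_ge j t with hjt | hjt
    · simpa [hjt.le, Nat.succ_le_of_lt hjt] using hw j hjt
    · obtain rfl : j = t := by omega
      simpa [ht] using hA

theorem localExp_eq {V : Type*} {A : V → V → Prop} {u : V} {e : ℕ}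
    (hup : ∀ t ≥ e, ∀ v, HasWalk A t u v) (hlow : ∀ t < e, ∃ v, ¬ HasWalk A t u v) :
    localExp A u = e := by
  refine le_antisymm (Nat.sInf_le hup) (le_csInf ⟨e, hup⟩ fun l hl => ?_)
  by_contra! hle
  obtain ⟨v, hv⟩ := hlow l hle
  exact hv (hl l le_rfl v)

theorem kthSmallest_eq_of_monotone {n : ℕ} {f : Fin n → ℕ} (hf : Monotone f) {m : ℕ}
    (hm : m - 1 < n) : kthSmallest f m = f ⟨m - 1, hm⟩ := by
  have hsort : Multiset.sort (Finset.univ.val.map f) (· ≤ ·) = List.ofFn f := by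
    rw [Fin.univ_val_map, Multiset.coe_sort]
    exact List.mergeSort_eq_self _ (List.pairwise_ofFn.mpr fun _ _ h => hf h.le)
  rw [kthSmallest, hsort, List.getD_eq_getElem _ _ (by simpa using hm), List.getElem_ofFn]

theorem exists_lt_add_mul_modEq_of_coprime {n c : ℕ} (hn : n ≠ 0) (hc : Nat.Coprime n c)
    (a b : ℕ) : ∃ s < n, b + s * c ≡ a [MOD n] := by
  obtain ⟨s, hs, hcs⟩ := Nat.exists_mul_mod_eq_of_coprime (a + (n - 1) * b) hc.symm hn
  refine ⟨s, hs, ?_⟩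
  obtain ⟨n, rfl⟩ := Nat.exists_eq_add_one_of_ne_zero hn
  calc b + s * c ≡ b + (a + n * b) [MOD n + 1] := Nat.ModEq.add_left b (by rwa [mul_comm])
    _ = a + (n + 1) * b := by ring
    _ ≡ a [MOD n + 1] := by simp [Nat.ModEq]

/-- The earliest time at which a walk in `D_{k,i}` from the vertex of index `u` can have
used `s` extra arcs. -/
def jumpTime (n k i u : ℕ) : ℕ → ℕ
  | 0 => 0
  | s + 1 => max (s + 1) (u + s * (n - k) + 2 - i)

section JumpTime

variable {n k i u : ℕ}

theorem le_jumpTime (s : ℕ) : s ≤ jumpTime n k i u s := by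
  cases s <;> simp [jumpTime]

theorem jumpTime_strictMono (hkn : k < n) : StrictMono (jumpTime n k i u) := by
  refine strictMono_nat_of_lt_succ fun s => ?_
  cases s <;> simp only [jumpTime, add_mul] <;> omega

/-- At time `jumpTime (s + 1) - 1` a greedy walk with `s` extra arcs stands on a door. -/
theorem exists_add_jumpTime_eq (hi : 1 ≤ i) (hkn : k < n) (s : ℕ) :
    ∃ x < i, x + jumpTime n k i u (s + 1) = u + s * (n - k) + 1 := by
  have hs : s ≤ s * (n - k) := Nat.le_mul_of_pos_right s (by omega)
  rcases le_total (s + 1) (u + s * (n - k) + 2 - i) with h | h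
  · exact ⟨i - 1, by omega, by simp only [jumpTime, max_eq_right h]; omega⟩
  · exact ⟨u + s * (n - k) - s, by omega, by simp only [jumpTime, max_eq_left h]; omega⟩

theorem jumpTime_pred_eq (hik : i ≤ k + 1) (hkn : k + 2 ≤ n) :
    jumpTime n k i u (n - 1) = (n - 2) * (n - k) + 1 - i + (u + 1) := by
  have hmul : (n - 2) * 2 ≤ (n - 2) * (n - k) := Nat.mul_le_mul_left _ (by omega)
  rw [show n - 1 = (n - 2) + 1 by omega, jumpTime, max_eq_right (by omega)]
  omega

end JumpTime

section Dki

variable {n k i : ℕ}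

theorem dkiAdj_mod_succ (v : Fin n) : DkiAdj n k i ⟨(v + 1) % n, Nat.mod_lt _ v.pos⟩ v := by
  rcases Nat.lt_or_ge (v + 1) n with h | h
  · exact Or.inl (Or.inr (Nat.mod_eq_of_lt h))
  · have hv : (v : ℕ) + 1 = n := by omega
    exact Or.inl (Or.inl ⟨by simp [hv], by omega⟩)

theorem dkiAdj_of_lt {x : ℕ} {v : Fin n} (hx : x < i) (hxn : x < n)
    (hv : (v : ℕ) + 1 = x + (n - k)) : DkiAdj n k i ⟨x, hxn⟩ v :=
  Or.inr ⟨x + 1, by omega, by omega, by simp, by omega⟩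

theorem exists_jumpTime_le_of_hasWalk (hkn : k < n) {u v : Fin n} {t : ℕ}
    (h : HasWalk (DkiAdj n k i) t u v) :
    ∃ s w, jumpTime n k i u s ≤ t ∧ (v : ℕ) + t = u + s * (n - k) + n * w := by
  induction t generalizing v with
  | zero =>
    obtain rfl := hasWalk_zero.mp h
    exact ⟨0, 0, le_rfl, by simp⟩
  | succ t ih =>
    obtain ⟨x, hx, hxv⟩ := hasWalk_succ.mp h
    obtain ⟨s, w, hs, hxt⟩ := ih hx
    rcases hxv with (⟨hx0, hv⟩ | hxv) | ⟨j, hj1, hji, hxj, hv⟩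
    · exact ⟨s, w + 1, by omega, by rw [mul_add]; omega⟩
    · exact ⟨s, w, by omega, by omega⟩
    · have hst := (le_jumpTime s).trans hs
      exact ⟨s + 1, w, max_le (by omega) (by omega), by rw [add_mul]; omega⟩

theorem hasWalk_of_jumpTime_le (hi : 1 ≤ i) (hik : i ≤ k + 1) (hkn : k < n) {u v : Fin n}
    {t s : ℕ} (hs : jumpTime n k i u s ≤ t) (h : (v : ℕ) + t ≡ u + s * (n - k) [MOD n]) :
    HasWalk (DkiAdj n k i) t u v := by
  induction t generalizing s v with
  | zero =>
    obtain rfl : s = 0 := by have := le_jumpTime (n := n) (k := k) (i := i) (u := u) s; omega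
    have huv : (u : ℕ) ≡ v [MOD n] := by simpa using h.symm
    exact hasWalk_zero.mpr (Fin.ext (huv.eq_of_lt_of_lt u.isLt v.isLt))
  | succ t ih =>
    rcases hs.lt_or_eq with hs | hs
    · have hw : (v + 1) % n + t ≡ u + s * (n - k) [MOD n] :=
        ((Nat.mod_modEq _ n).add_right t).trans (by rwa [add_right_comm, add_assoc])
      exact hasWalk_succ.mpr ⟨_, ih (by omega) hw, dkiAdj_mod_succ v⟩
    · obtain ⟨s, rfl⟩ : ∃ s', s = s' + 1 :=
        Nat.exists_eq_add_one_of_ne_zero (by rintro rfl; simp [jumpTime] at hs)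
      obtain ⟨x, hxi, hx⟩ := exists_add_jumpTime_eq (u := u) hi hkn s
      have hlt := jumpTime_strictMono (i := i) (u := u) hkn (Nat.lt_add_one s)
      have hxt : x + t = u + s * (n - k) := by omega
      have hv : (v : ℕ) = x + (n - k) - 1 := by
        have hmod : (v : ℕ) + (t + 1) ≡ x + (n - k) - 1 + (t + 1) [MOD n] := by
          rwa [show x + (n - k) - 1 + (t + 1) = u + (s + 1) * (n - k) by rw [add_mul]; omega]
        exact (Nat.ModEq.add_right_cancel' _ hmod).eq_of_lt_of_lt v.isLt (by omega)
      exact hasWalk_succ.mpr ⟨⟨x, by omega⟩, ih (s := s) (by omega) (by rw [hxt]),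
        dkiAdj_of_lt hxi _ (by omega)⟩

theorem hasWalk_of_jumpTime_pred_le (hi : 1 ≤ i) (hik : i ≤ k + 1) (hkn : k < n)
    (hco : Nat.Coprime n (n - k)) {u : Fin n} {t : ℕ} (ht : jumpTime n k i u (n - 1) ≤ t)
    (v : Fin n) : HasWalk (DkiAdj n k i) t u v := by
  obtain ⟨s, hs, hsv⟩ := exists_lt_add_mul_modEq_of_coprime (by omega) hco (v + t) u
  have hmono := (jumpTime_strictMono (i := i) (u := u) hkn).monotone
  exact hasWalk_of_jumpTime_le hi hik hkn ((hmono (by omega)).trans ht) hsv.symm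

theorem exists_not_hasWalk_of_lt_jumpTime_pred (hkn : k < n) (hco : Nat.Coprime n (n - k))
    {u : Fin n} {t : ℕ} (ht : t < jumpTime n k i u (n - 1)) :
    ∃ v, ¬ HasWalk (DkiAdj n k i) t u v := by
  obtain ⟨v, hv, htv⟩ := exists_lt_add_mul_modEq_of_coprime (by omega) (Nat.coprime_one_right n)
    (u + (n - 1) * (n - k)) t
  refine ⟨⟨v, hv⟩, fun hw => ?_⟩
  obtain ⟨s, w, hs, hsw⟩ := exists_jumpTime_le_of_hasWalk hkn hw
  have hsk : u + s * (n - k) ≡ u + (n - 1) * (n - k) [MOD n] :=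
    calc u + s * (n - k) ≡ u + s * (n - k) + n * w [MOD n] := by simp [Nat.ModEq]
      _ = t + v * 1 := by rw [← hsw]; ring
      _ ≡ u + (n - 1) * (n - k) [MOD n] := htv
  have hsn : s % n = n - 1 := by
    have hs : s ≡ n - 1 [MOD n] := (Nat.ModEq.add_left_cancel' _ hsk).cancel_right_of_coprime hco
    rwa [Nat.ModEq, Nat.mod_eq_of_lt (Nat.sub_lt (by omega) one_pos)] at hs
  have := (jumpTime_strictMono (i := i) (u := u) hkn).monotone (hsn ▸ Nat.mod_le s n)
  omega

end Dki

/-- Let `n, k` be positive integers with `gcd(n, n-k) = 1` and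
`1 ≤ i ≤ min{k+1, n-k-1}`. Then `D_{k,i}` is primitive and for every `1 ≤ m ≤ n`
its `m`-th smallest local exponent is attained at `v_m` and equals
`(n-2)(n-k) + 1 - i + m`. -/
theorem stmt0 (n k i : ℕ)
    (hgcd : Nat.gcd n (n - k) = 1)
    (hi1 : 1 ≤ i) (hi2 : i ≤ min (k + 1) (n - k - 1)) :
    IsPrimitive (DkiAdj n k i) ∧
    ∀ m : ℕ, ∀ _hm1 : 1 ≤ m, ∀ _hm2 : m ≤ n,
      kthSmallest (localExp (DkiAdj n k i)) m
        = localExp (DkiAdj n k i) ⟨m - 1, by omega⟩ ∧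
      localExp (DkiAdj n k i) ⟨m - 1, by omega⟩
        = (n - 2) * (n - k) + 1 - i + m := by
  have hik : i ≤ k + 1 := hi2.trans (min_le_left _ _)
  have hkn : k + 2 ≤ n := by have := hi2.trans (min_le_right _ _); omega
  have hco : Nat.Coprime n (n - k) := hgcd
  have hexp (u : Fin n) : localExp (DkiAdj n k i) u = (n - 2) * (n - k) + 1 - i + (u + 1) := by
    rw [← jumpTime_pred_eq hik hkn]
    exact localExp_eq (fun t ht => hasWalk_of_jumpTime_pred_le hi1 hik (by omega) hco ht)
      (fun t ht => exists_not_hasWalk_of_lt_jumpTime_pred (by omega) hco ht)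
  have hwalk (u v : Fin n) : HasWalk (DkiAdj n k i) ((n - 2) * (n - k) + n) u v :=
    hasWalk_of_jumpTime_pred_le hi1 hik (by omega) hco (by rw [jumpTime_pred_eq hik hkn]; omega) v
  have hmono : Monotone (localExp (DkiAdj n k i)) := fun u v huv => by
    rw [hexp, hexp]
    exact Nat.add_le_add_left (Nat.succ_le_succ huv) _
  refine ⟨⟨fun u v => ⟨_, hwalk u v⟩, _, by omega, hwalk⟩, fun m hm1 hm2 => ?_⟩
  exact ⟨kthSmallest_eq_of_monotone hmono _, by rw [hexp, Fin.val_mk]; omega⟩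
end

section
/- Let n ≥ 6 be odd. Then the digraph 𝓛 is primitive and for every 1 ≤ k ≤ n its k-th smallest local exponent is attained at v_k and equals exp_𝓛(k) = exp_𝓛(v_k) = (n−1)(n−3) + k − 1. -/
/-!
Index the vertices by `0, …, n-1` and use the index as a potential. Every arc `a → b` of `𝓛`
satisfies `1 + b = a + s` with `s ∈ {0, n-2, n}`, so a walk of length `t` from `u` to `v` has
`t + v - u` in the numerical semigroup `⟨n-2, n⟩`. For odd `n` its generators are coprime and its
Frobenius number is `(n-1)(n-3) - 1`; hence no walk of length `(n-1)(n-3) + u - 1` leads from `u`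
to `v₁`. Conversely, `v₁` carries cycles of lengths `n-2` and `n`, and three paths leave `v₁`
(through `vₙ`, through `v_{n-2}`, and through `v_{n-2}` and then `vₙ`) that together realize
every length `t` with `t + v ∈ ⟨n-2, n⟩` and `t + v ≥ n`. Descending from `u` to `v₁` first gives
`exp(u) = (n-1)(n-3) + u`, which is increasing in the index.
-/

section Walks

variable {V : Type*} {A : V → V → Prop}

theorem HasWalk.zero (u : V) : HasWalk A 0 u u :=
  ⟨fun _ => u, rfl, rfl, fun _ hi => absurd hi (Nat.not_lt_zero _)⟩

theorem HasWalk.of_adj {u v : V} (h : A u v) : HasWalk A 1 u v :=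
  ⟨fun i => if i = 0 then u else v, rfl, rfl, fun i hi => by
    obtain rfl : i = 0 := by omega
    simpa using h⟩

theorem HasWalk.append {s t : ℕ} {u v w : V} (h₁ : HasWalk A s u v) (h₂ : HasWalk A t v w) :
    HasWalk A (s + t) u w := by
  obtain ⟨f, rfl, rfl, hf⟩ := h₁
  obtain ⟨g, hg0, rfl, hg⟩ := h₂
  refine ⟨fun i => if i ≤ s then f i else g (i - s), by simp, ?_, fun i hi => ?_⟩
  · by_cases ht : t = 0
    · subst ht; simp [hg0]
    · simp [show ¬ s + t ≤ s by omega]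
  · by_cases his : i + 1 ≤ s
    · simpa [his, show i ≤ s by omega] using hf i (by omega)
    · by_cases hi' : i = s
      · subst hi'
        simpa [hg0] using hg 0 (by omega)
      · have := hg (i - s) (by omega)
        simp only [his, show ¬ i ≤ s by omega, if_false]
        rwa [show i + 1 - s = i - s + 1 by omega]

theorem HasWalk.of_length_eq {s t : ℕ} {u v : V} (h : HasWalk A s u v) (hst : s = t) :
    HasWalk A t u v :=
  hst ▸ h

theorem HasWalk.repeat {t : ℕ} {u : V} (h : HasWalk A t u u) (k : ℕ) : HasWalk A (k * t) u u := by
  induction k with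
  | zero => simpa using HasWalk.zero u
  | succ k ih => exact (ih.append h).of_length_eq (by ring)

theorem HasWalk.exists_mem_length_add_potential {S : AddSubmonoid ℕ} (φ : V → ℕ)
    (hA : ∀ a b, A a b → ∃ s ∈ S, 1 + φ b = φ a + s) {t : ℕ} {u v : V}
    (h : HasWalk A t u v) : ∃ s ∈ S, t + φ v = φ u + s := by
  obtain ⟨f, rfl, rfl, hf⟩ := h
  suffices ∀ i ≤ t, ∃ s ∈ S, i + φ (f i) = φ (f 0) + s from this t le_rfl
  intro i hi
  induction i with
  | zero => exact ⟨0, S.zero_mem, by simp⟩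
  | succ i ih =>
    obtain ⟨s, hs, hs_eq⟩ := ih (by omega)
    obtain ⟨s', hs', hs'_eq⟩ := hA _ _ (hf i (by omega))
    exact ⟨s + s', S.add_mem hs hs', by omega⟩

theorem isPrimitive_of_forall_hasWalk {N : ℕ} (h : ∀ t ≥ N, ∀ u v : V, HasWalk A t u v) :
    IsPrimitive A :=
  ⟨fun u v => ⟨N, h N le_rfl u v⟩, N + 1, N.succ_pos, h (N + 1) N.le_succ⟩

theorem localExp_eq_of_hasWalk {u v : V} {l : ℕ} (hup : ∀ t ≥ l + 1, ∀ w, HasWalk A t u w)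
    (hlow : ¬ HasWalk A l u v) : localExp A u = l + 1 := by
  refine le_antisymm (Nat.sInf_le hup) (le_csInf ⟨l + 1, hup⟩ fun m hm => ?_)
  by_contra! hml
  exact hlow (hm l (by omega) v)

end Walks

theorem kthSmallest_succ_of_monotone {n : ℕ} {f : Fin n → ℕ} (hf : Monotone f) (i : Fin n) :
    kthSmallest f (i + 1) = f i := by
  have hsorted : (List.ofFn f).Pairwise (· ≤ ·) :=
    List.pairwise_ofFn.mpr fun _ _ hij => hf hij.le
  rw [kthSmallest, Fin.univ_val_map, Multiset.coe_sort, List.mergeSort_eq_self _ hsorted,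
    Nat.add_sub_cancel, List.getD_eq_getElem _ _ (by simp), List.getElem_ofFn]

theorem Odd.coprime_sub_two_self {n : ℕ} (hodd : Odd n) : Nat.Coprime (n - 2) n := by
  obtain ⟨m, rfl⟩ := hodd
  rcases m with _ | m
  · simp
  · rw [show 2 * (m + 1) + 1 = 2 + (2 * m + 1) by ring, Nat.add_sub_cancel_left,
      Nat.coprime_add_self_right, Nat.coprime_two_right]
    exact odd_two_mul_add_one m

theorem frobeniusNumber_sub_two_self {n : ℕ} (hn : 4 ≤ n) (hodd : Odd n) :
    FrobeniusNumber ((n - 1) * (n - 3) - 1) {n - 2, n} := by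
  convert frobeniusNumber_pair hodd.coprime_sub_two_self (by omega) (by omega) using 1
  obtain ⟨m, rfl⟩ : ∃ m, n = m + 4 := ⟨n - 4, by omega⟩
  simp only [show m + 4 - 1 = m + 3 by omega, show m + 4 - 2 = m + 2 by omega,
    show m + 4 - 3 = m + 1 by omega]
  ring_nf
  omega

namespace LAdj

variable {n : ℕ}

theorem hasWalk_descend {x y : ℕ} (hx : x < n) (hyx : y ≤ x) :
    HasWalk (LAdj n) (x - y) ⟨x, hx⟩ ⟨y, by omega⟩ := by
  obtain ⟨d, rfl⟩ := Nat.exists_eq_add_of_le hyx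
  induction d with
  | zero => simpa using HasWalk.zero _
  | succ d ih =>
    have harc : LAdj n ⟨y + (d + 1), hx⟩ ⟨y + d, by omega⟩ := Or.inl (Or.inr rfl)
    exact (HasWalk.of_adj harc |>.append (ih (by omega) (by omega))).of_length_eq (by omega)

theorem hasWalk_zero_via_last (hn : 1 ≤ n) (v : Fin n) :
    HasWalk (LAdj n) (n - v) ⟨0, by omega⟩ v := by
  have harc : LAdj n ⟨0, by omega⟩ ⟨n - 1, by omega⟩ := Or.inl (Or.inl ⟨rfl, rfl⟩)
  exact (HasWalk.of_adj harc |>.append (hasWalk_descend _ (by omega : v.val ≤ n - 1))).of_length_eq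
    (by omega)

theorem hasWalk_zero_via_chord (hn : 3 ≤ n) (v : Fin n) (hv : v.val ≤ n - 3) :
    HasWalk (LAdj n) (n - 2 - v) ⟨0, by omega⟩ v := by
  have harc : LAdj n ⟨0, by omega⟩ ⟨n - 3, by omega⟩ := Or.inr (Or.inl ⟨rfl, rfl⟩)
  exact (HasWalk.of_adj harc |>.append (hasWalk_descend _ hv)).of_length_eq (by omega)

theorem hasWalk_zero_via_both_chords (hn : 5 ≤ n) (v : Fin n) :
    HasWalk (LAdj n) (2 * n - 4 - v) ⟨0, by omega⟩ v := by
  have harc₁ : LAdj n ⟨0, by omega⟩ ⟨n - 3, by omega⟩ := Or.inr (Or.inl ⟨rfl, rfl⟩)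
  have harc₂ : LAdj n ⟨2, by omega⟩ ⟨n - 1, by omega⟩ := Or.inr (Or.inr ⟨rfl, rfl⟩)
  have h₁ := HasWalk.of_adj harc₁ |>.append (hasWalk_descend _ (by omega : 2 ≤ n - 3))
  have h₂ := HasWalk.of_adj harc₂ |>.append (hasWalk_descend _ (by omega : v.val ≤ n - 1))
  exact (h₁.append h₂).of_length_eq (by omega)

theorem hasWalk_zero_of_mem_closure (hn : 5 ≤ n) (v : Fin n) {t : ℕ}
    (hmem : t + v ∈ AddSubmonoid.closure {n - 2, n}) (hnt : n ≤ t + v) :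
    HasWalk (LAdj n) t ⟨0, by omega⟩ v := by
  obtain ⟨a, b, hab⟩ := (AddSubmonoid.mem_closure_pair _ _ _).mp hmem
  simp only [smul_eq_mul] at hab
  have hshort : HasWalk (LAdj n) (n - 2) ⟨0, by omega⟩ ⟨0, by omega⟩ :=
    hasWalk_zero_via_chord (by omega) ⟨0, by omega⟩ (Nat.zero_le _)
  have hlong : HasWalk (LAdj n) n ⟨0, by omega⟩ ⟨0, by omega⟩ :=
    hasWalk_zero_via_last (by omega) ⟨0, by omega⟩
  rcases b with _ | b
  · -- a single `n - 2` cycle is too short, so the cycle count `a` is at least two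
    rcases a with _ | _ | a
    · omega
    · omega
    simp only [add_mul, one_mul, zero_mul, add_zero] at hab
    by_cases hv : v.val ≤ n - 3
    · exact ((hshort.repeat (a + 1)).append (hasWalk_zero_via_chord (by omega) v hv)).of_length_eq
        (by rw [add_one_mul]; omega)
    · exact ((hshort.repeat a).append (hasWalk_zero_via_both_chords hn v)).of_length_eq
        (by omega)
  · rw [add_one_mul] at hab
    exact ((hshort.repeat a).append (hlong.repeat b) |>.append
      (hasWalk_zero_via_last (by omega) v)).of_length_eq (by omega)

theorem exists_mem_closure_one_add_eq (hn : 3 ≤ n) {a b : Fin n} (h : LAdj n a b) :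
    ∃ s ∈ AddSubmonoid.closure {n - 2, n}, 1 + b.val = a.val + s := by
  have hshort : n - 2 ∈ AddSubmonoid.closure {n - 2, n} := AddSubmonoid.subset_closure (by simp)
  have hlong : n ∈ AddSubmonoid.closure {n - 2, n} := AddSubmonoid.subset_closure (by simp)
  rcases h with (⟨ha, hb⟩ | hab) | ⟨ha, hb⟩ | ⟨ha, hb⟩
  · exact ⟨n, hlong, by omega⟩
  · exact ⟨0, zero_mem _, by omega⟩
  · exact ⟨n - 2, hshort, by omega⟩
  · exact ⟨n - 2, hshort, by omega⟩

theorem not_hasWalk_to_zero (hn : 5 ≤ n) (hodd : Odd n) (u : Fin n) :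
    ¬ HasWalk (LAdj n) ((n - 1) * (n - 3) - 1 + u) u ⟨0, by omega⟩ := by
  intro h
  obtain ⟨s, hs, hs_eq⟩ := h.exists_mem_length_add_potential (fun v => v.val)
    fun a b hab => exists_mem_closure_one_add_eq (by omega) hab
  obtain rfl : s = (n - 1) * (n - 3) - 1 := by simp only at hs_eq; omega
  exact (frobeniusNumber_iff.mp (frobeniusNumber_sub_two_self (by omega) hodd)).1 hs

theorem hasWalk_of_le (hn : 5 ≤ n) (hodd : Odd n) {u v : Fin n} {t : ℕ}
    (ht : (n - 1) * (n - 3) + u ≤ t) : HasWalk (LAdj n) t u v := by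
  have hn_le : n ≤ (n - 1) * (n - 3) := by
    have := Nat.mul_le_mul_left (n - 1) (show 2 ≤ n - 3 by omega)
    omega
  have hmem := (frobeniusNumber_iff.mp (frobeniusNumber_sub_two_self (by omega) hodd)).2
    (t - u + v) (by omega)
  exact ((hasWalk_descend u.isLt (Nat.zero_le _)).append
    (hasWalk_zero_of_mem_closure hn v hmem (by omega))).of_length_eq (by omega)

theorem localExp_eq (hn : 5 ≤ n) (hodd : Odd n) (u : Fin n) :
    localExp (LAdj n) u = (n - 1) * (n - 3) + u := by
  have hpos : 1 ≤ (n - 1) * (n - 3) := Nat.mul_pos (by omega) (by omega)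
  have := localExp_eq_of_hasWalk (fun t ht w => hasWalk_of_le hn hodd (by omega))
    (not_hasWalk_to_zero hn hodd u)
  omega

end LAdj

/-- Let `n ≥ 6` be odd. Then the digraph `𝓛` is primitive and
for every `1 ≤ k ≤ n` its `k`-th smallest local exponent is attained at `v_k`
and equals `(n-1)(n-3) + k - 1`. -/
theorem stmt1 (n : ℕ) (hn : 6 ≤ n) (hodd : Odd n) :
    IsPrimitive (LAdj n) ∧
    ∀ k : ℕ, ∀ _hk1 : 1 ≤ k, ∀ _hk2 : k ≤ n,
      kthSmallest (localExp (LAdj n)) k = localExp (LAdj n) ⟨k - 1, by omega⟩ ∧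
      localExp (LAdj n) ⟨k - 1, by omega⟩ = (n - 1) * (n - 3) + k - 1 := by
  have hexp := LAdj.localExp_eq (by omega) hodd
  have hmono : Monotone (localExp (LAdj n)) := fun i j hij => by
    simp only [hexp]
    exact Nat.add_le_add_left hij _
  refine ⟨isPrimitive_of_forall_hasWalk (N := (n - 1) * (n - 3) + n) fun t ht u v =>
    LAdj.hasWalk_of_le (by omega) hodd (by have := u.isLt; omega), fun k hk₁ hk₂ => ⟨?_, ?_⟩⟩
  · have := kthSmallest_succ_of_monotone hmono ⟨k - 1, by omega⟩
    rwa [Fin.val_mk, Nat.sub_add_cancel hk₁] at this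
  · rw [hexp, Fin.val_mk]
    omega
end

section
/- Let n ≥ 6 and let 𝒮₀ be a primitive nonpowerful signed digraph whose underlying digraph is F, in which all cycles of length n−1 have the same sign and all cycles of length n−2 have the same sign. Then l_{𝒮₀}(k) = l_{𝒮₀}(v_k) = 2n²−8n+9+k for 1 ≤ k ≤ n−2, and l_{𝒮₀}(k) = l_{𝒮₀}(v_k) = 2n²−8n+8+k for n−1 ≤ k ≤ n. -/
/-!
Every vertex `v ≠ v₁` of `F` has a unique out-neighbour, so `F` consists of the long cycle
(length `n - 1`) and the short cycle (length `n - 2`) through the hub `v₁`, glued along the path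
`v_{n-3} → ⋯ → v₁`. Following the forced arcs gives a path from `v` to `v₁` of length `h(v)`
(`height`) and sign `p(v)` (`potential`), and `sgn(a, b) p(b) = p(a)` for every arc not leaving
the hub. Telescoping, a walk `u → v` of length `t` that leaves the hub `N` times along the long
cycle and `M` times along the short one satisfies `h(u) + N(n-1) + M(n-2) = t + h(v)`, and its
sign is `p(u) p(v) σ^N τ^M`, where `σ, τ` (`longSign`, `shortSign`) are the signs of the cycles.

If `σ^(n-2) = τ^(n-1)`, the sign of a closed walk at `v₁` would only depend on its length, so
nonpowerfulness gives `σ^(n-2) ≠ τ^(n-1)`: the long cycle taken `n - 2` times and the short one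
taken `n - 1` times form an SSSD pair. Prefixing the path `u → v₁` and appending walks `v₁ → v`,
which exist for all lengths `≥ (n-1)(n-2) - (n-1) - (n-2) + 3` by the Chicken McNugget theorem,
gives SSSD pairs from `u` of every length `≥ h(u) + 2n² - 8n + 10`. Conversely, a walk of length
`h(u) + 2n² - 8n + 9` from `u` to `v_{n-1}` ends with `v₁ → v_n → v_{n-1}`, and then `(N, M)` is
determined by the length, because `(n-1)(n-2) - (n-1) - (n-2)` is not a combination of `n - 1`
and `n - 2`; so all these walks have the same sign. Hence `l(u) = h(u) + 2n² - 8n + 10`, which is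
monotone in the index of `u`.
-/

open Finset

section Walks

variable {V : Type*}

def walkAppend (f g : ℕ → V) (a : ℕ) : ℕ → V := fun i => if i < a then f i else g (i - a)

variable {f g : ℕ → V} {a b : ℕ}

theorem walkAppend_of_le (h : f a = g 0) {i : ℕ} (hi : i ≤ a) : walkAppend f g a i = f i := by
  unfold walkAppend
  split_ifs
  · rfl
  · rw [show i = a by omega, Nat.sub_self, h]

theorem walkAppend_add (i : ℕ) : walkAppend f g a (a + i) = g i := by
  simp [walkAppend]

theorem IsWalk.append {A : V → V → Prop} (hf : IsWalk A a f) (hg : IsWalk A b g)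
    (h : f a = g 0) : IsWalk A (a + b) (walkAppend f g a) := by
  intro i hi
  rcases lt_or_ge i a with hia | hia
  · rw [walkAppend_of_le h hia.le, walkAppend_of_le h hia]
    exact hf i hia
  · obtain ⟨j, rfl⟩ := Nat.exists_eq_add_of_le hia
    rw [walkAppend_add, add_assoc, walkAppend_add]
    exact hg j (by omega)

theorem IsWalk.height_add_sum {A : V → V → Prop} (h : V → ℕ) (w : V → V → ℕ)
    (hw : ∀ a b, A a b → h a + w a b = h b + 1) {t : ℕ} {f : ℕ → V} (hf : IsWalk A t f) :
    h (f 0) + ∑ i ∈ range t, w (f i) (f (i + 1)) = t + h (f t) := by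
  induction t with
  | zero => simp
  | succ t ih =>
    have := hw _ _ (hf t (by omega))
    rw [sum_range_succ, ← add_assoc, ih fun i hi => hf i (by omega)]
    omega

end Walks

namespace SignedDigraph

variable {V : Type*} (S : SignedDigraph V)

theorem walkSign_append {f g : ℕ → V} {a : ℕ} (h : f a = g 0) (b : ℕ) :
    S.walkSign (a + b) (walkAppend f g a) = S.walkSign a f * S.walkSign b g := by
  unfold walkSign
  rw [prod_range_add]
  congr 1
  · refine prod_congr rfl fun i hi => ?_
    have hi := mem_range.mp hi
    rw [walkAppend_of_le h hi.le, walkAppend_of_le h hi]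
  · refine prod_congr rfl fun i _ => ?_
    rw [walkAppend_add, add_assoc, walkAppend_add]

theorem isUnit_walkSign {t : ℕ} {f : ℕ → V} (hf : IsWalk S.Adj t f) : IsUnit (S.walkSign t f) :=
  IsUnit.prod_iff.mpr fun i hi =>
    Int.isUnit_iff.mpr (S.sgn_unit _ _ (hf i (mem_range.mp hi)))

theorem walkSign_mul_eq_mul_prod (g : V → ℤ) (d : V → V → ℤ)
    (hd : ∀ a b, S.Adj a b → S.sgn a b * g b = g a * d a b) {t : ℕ} {f : ℕ → V}
    (hf : IsWalk S.Adj t f) :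
    S.walkSign t f * g (f t) = g (f 0) * ∏ i ∈ range t, d (f i) (f (i + 1)) := by
  induction t with
  | zero => simp [walkSign]
  | succ t ih =>
    rw [walkSign, prod_range_succ, mul_assoc, hd _ _ (hf t (by omega)), ← mul_assoc, ← walkSign,
      ih fun i hi => hf i (by omega), prod_range_succ, mul_assoc]

theorem localBase_eq_succ {u : V} {L : ℕ} (hup : ∀ t > L, ∀ v, S.HasSSSD t u v) {v : V}
    (hlow : ¬ S.HasSSSD L u v) : S.localBase u = L + 1 := by
  have hmem : L + 1 ∈ {l : ℕ | ∀ t ≥ l, ∀ v : V, S.HasSSSD t u v} := fun t ht => hup t ht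
  refine le_antisymm (Nat.sInf_le hmem) (le_csInf ⟨_, hmem⟩ fun l hl => ?_)
  by_contra! hlt
  exact hlow (hl L (by omega) v)

def HasSignedWalk (t : ℕ) (u v : V) (s : ℤ) : Prop :=
  ∃ f : ℕ → V, f 0 = u ∧ f t = v ∧ IsWalk S.Adj t f ∧ S.walkSign t f = s

variable {S}

theorem hasSignedWalk_zero (u : V) : S.HasSignedWalk 0 u u 1 :=
  ⟨fun _ => u, rfl, rfl, fun _ hi => absurd hi (Nat.not_lt_zero _), prod_range_zero _⟩

theorem hasSignedWalk_single {u v : V} (h : S.Adj u v) : S.HasSignedWalk 1 u v (S.sgn u v) :=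
  ⟨fun i => if i = 0 then u else v, rfl, rfl, fun i hi => by simpa [Nat.lt_one_iff.mp hi] using h,
    by simp [walkSign]⟩

theorem HasSignedWalk.isUnit {t : ℕ} {u v : V} {s : ℤ} (h : S.HasSignedWalk t u v s) :
    IsUnit s := by
  obtain ⟨f, -, -, hf, rfl⟩ := h
  exact S.isUnit_walkSign hf

theorem HasSignedWalk.trans {a b : ℕ} {u w v : V} {s s' : ℤ} (h : S.HasSignedWalk a u w s)
    (h' : S.HasSignedWalk b w v s') : S.HasSignedWalk (a + b) u v (s * s') := by
  obtain ⟨f, hf0, hfa, hf, rfl⟩ := h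
  obtain ⟨g, hg0, hgb, hg, rfl⟩ := h'
  have hfg : f a = g 0 := hfa.trans hg0.symm
  exact ⟨walkAppend f g a, by rw [walkAppend_of_le hfg (Nat.zero_le a), hf0],
    by rw [walkAppend_add, hgb], hf.append hg hfg, S.walkSign_append hfg b⟩

theorem HasSignedWalk.pow {p : ℕ} {u : V} {s : ℤ} (h : S.HasSignedWalk p u u s) (k : ℕ) :
    S.HasSignedWalk (k * p) u u (s ^ k) := by
  induction k with
  | zero => simpa using hasSignedWalk_zero u
  | succ k ih => simpa [add_mul, pow_succ] using ih.trans h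

theorem hasSSSD_iff {t : ℕ} {u v : V} :
    S.HasSSSD t u v ↔ ∃ s s', s ≠ s' ∧ S.HasSignedWalk t u v s ∧ S.HasSignedWalk t u v s' := by
  constructor
  · rintro ⟨f, g, ⟨hf0, hft, hf⟩, ⟨hg0, hgt, hg⟩, hne⟩
    exact ⟨_, _, hne, ⟨f, hf0, hft, hf, rfl⟩, ⟨g, hg0, hgt, hg, rfl⟩⟩
  · rintro ⟨s, s', hne, ⟨f, hf0, hft, hf, rfl⟩, ⟨g, hg0, hgt, hg, rfl⟩⟩
    exact ⟨f, g, ⟨hf0, hft, hf⟩, ⟨hg0, hgt, hg⟩, hne⟩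

theorem HasSignedWalk.trans_hasSSSD {a m : ℕ} {u w v : V} {s : ℤ} (h : S.HasSignedWalk a u w s)
    (h' : S.HasSSSD m w v) : S.HasSSSD (a + m) u v := by
  obtain ⟨σ, τ, hne, hσ, hτ⟩ := hasSSSD_iff.mp h'
  exact hasSSSD_iff.mpr ⟨s * σ, s * τ, fun e => hne (h.isUnit.mul_left_cancel e),
    h.trans hσ, h.trans hτ⟩

theorem HasSSSD.trans_hasSignedWalk {m b : ℕ} {u w v : V} {s : ℤ} (h : S.HasSSSD m u w)
    (h' : S.HasSignedWalk b w v s) : S.HasSSSD (m + b) u v := by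
  obtain ⟨σ, τ, hne, hσ, hτ⟩ := hasSSSD_iff.mp h
  exact hasSSSD_iff.mpr ⟨σ * s, τ * s, fun e => hne (h'.isUnit.mul_right_cancel e),
    hσ.trans h', hτ.trans h'⟩

theorem hasSSSD_of_pow_ne {p q : ℕ} {u : V} {σ τ : ℤ} (hσ : S.HasSignedWalk p u u σ)
    (hτ : S.HasSignedWalk q u u τ) (hne : σ ^ q ≠ τ ^ p) : S.HasSSSD (p * q) u u :=
  hasSSSD_iff.mpr ⟨σ ^ q, τ ^ p, hne, by simpa [mul_comm] using hσ.pow q, hτ.pow p⟩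

end SignedDigraph

theorem kthSmallest_of_monotone {n : ℕ} {f : Fin n → ℕ} (hf : Monotone f) {k : ℕ}
    (hk1 : 1 ≤ k) (hk2 : k ≤ n) : kthSmallest f k = f ⟨k - 1, by omega⟩ := by
  have hsort : Multiset.sort (Finset.univ.val.map f) (· ≤ ·) = List.ofFn f := by
    rw [Fin.univ_val_map]
    exact List.Perm.eq_of_pairwise' (Multiset.pairwise_sort _ _)
      (List.pairwise_ofFn.mpr fun _ _ h => hf h.le) (Multiset.coe_eq_coe.mp (Multiset.sort_eq _ _))
  rw [kthSmallest, hsort, List.getD_eq_getElem _ _ (by rw [List.length_ofFn]; omega),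
    List.getElem_ofFn]

theorem Nat.exists_eq_add_mul_of_add_mul_eq {p q a b a' b' : ℕ} (hpq : p.Coprime q) (hq : 0 < q)
    (h : a * p + b * q = a' * p + b' * q) (ha : a ≤ a') :
    ∃ k, a' = a + k * q ∧ b = b' + k * p := by
  obtain ⟨d, rfl⟩ := Nat.exists_eq_add_of_le ha
  have hb : b' ≤ b := Nat.le_of_mul_le_mul_right (by rw [add_mul] at h; omega) hq
  obtain ⟨e, rfl⟩ := Nat.exists_eq_add_of_le hb
  have hed : e * q = d * p := by rw [add_mul, add_mul] at h; omega
  obtain ⟨k, rfl⟩ : q ∣ d := hpq.symm.dvd_of_dvd_mul_right ⟨e, by rw [← hed, mul_comm]⟩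
  refine ⟨k, by ring, ?_⟩
  have : e * q = k * p * q := by rw [hed]; ring
  rw [Nat.eq_of_mul_eq_mul_right hq this]

theorem pow_mul_pow_eq_of_add_mul_eq {M : Type*} [CommMonoid M] {x y : M} {p q : ℕ}
    (hpq : p.Coprime q) (hq : 0 < q) (hxy : x ^ q = y ^ p) {a b a' b' : ℕ}
    (h : a * p + b * q = a' * p + b' * q) : x ^ a * y ^ b = x ^ a' * y ^ b' := by
  wlog ha : a ≤ a' generalizing a b a' b'
  · exact (this h.symm (by omega)).symm
  obtain ⟨k, rfl, rfl⟩ := Nat.exists_eq_add_mul_of_add_mul_eq hpq hq h ha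
  rw [pow_add, pow_add, mul_comm k q, mul_comm k p, pow_mul, pow_mul, hxy]
  ac_rfl

theorem Nat.eq_of_add_mul_eq_of_forall_ne {p q N M N' M' : ℕ} (hpq : p.Coprime q) (hq : 0 < q)
    (h : N * p + M * q = N' * p + M' * q) (hN : 1 ≤ N) (hN' : 1 ≤ N')
    (hX : ∀ a b, a * p + b * q + p * q + p ≠ N * p + M * q) : N = N' ∧ M = M' := by
  wlog hle : N ≤ N' generalizing N M N' M'
  · obtain ⟨h1, h2⟩ := this h.symm hN' hN (h ▸ hX) (by omega)
    exact ⟨h1.symm, h2.symm⟩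
  obtain ⟨k, rfl, rfl⟩ := Nat.exists_eq_add_mul_of_add_mul_eq hpq hq h hle
  obtain _ | k := k
  · simp
  obtain ⟨N, rfl⟩ := Nat.exists_eq_add_of_le' hN
  exact absurd (by rw [h]; ring) (hX (N + k * q) M')

namespace FDigraph

open SignedDigraph

variable {n : ℕ}

/-- For `v ≠ v₁` the unique out-neighbour of `v` in `F`; the value at `v₁` is junk. -/
def down (v : Fin n) : Fin n :=
  ⟨if v.val = n - 1 then n - 2 else if v.val = n - 2 ∨ v.val = n - 3 then n - 4 else v.val - 1,
    by split_ifs <;> omega⟩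

theorem val_down (v : Fin n) : (down v).val =
    if v.val = n - 1 then n - 2 else if v.val = n - 2 ∨ v.val = n - 3 then n - 4 else v.val - 1 :=
  rfl

/-- The length of the path from `v` to `v₁` along `down`. -/
def height (v : Fin n) : ℕ :=
  if v.val = n - 1 then n - 2 else if v.val = n - 2 then n - 3 else v.val

theorem height_monotone : Monotone (height (n := n)) := by
  intro a b hab
  have : a.val ≤ b.val := hab
  unfold height
  split_ifs <;> omega

theorem fAdj_iff {a b : Fin n} :
    FAdj n a b ↔ (a.val = 0 ∧ (b.val = n - 1 ∨ b.val = n - 3)) ∨ (a.val ≠ 0 ∧ b = down a) := by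
  rw [Fin.ext_iff, val_down]
  unfold FAdj
  split_ifs <;> omega

theorem height_down (v : Fin n) : height (down v) = height v - 1 := by
  simp only [height, val_down]
  split_ifs <;> omega

theorem height_iterate_down (v : Fin n) (i : ℕ) : height (down^[i] v) = height v - i := by
  induction i with
  | zero => rfl
  | succ i ih => rw [Function.iterate_succ_apply', height_down, ih, Nat.sub_sub]

theorem height_of_le {v : Fin n} (hv : v.val ≤ n - 3) : height v = v.val := by
  unfold height
  split_ifs <;> omega

theorem val_iterate_down_of_le {v : Fin n} (hv : v.val ≤ n - 3) (j : ℕ) :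
    (down^[j] v).val = v.val - j := by
  induction j with
  | zero => rfl
  | succ j ih =>
    rw [Function.iterate_succ_apply', val_down, ih]
    split_ifs <;> omega

section
variable (hn : 6 ≤ n)
include hn

-- `v₁`, `v_n` and `v_{n-2}` in the numbering of the paper.
def hub : Fin n := ⟨0, by omega⟩
def longSucc : Fin n := ⟨n - 1, by omega⟩
def shortSucc : Fin n := ⟨n - 3, by omega⟩

@[simp] theorem val_hub : (hub hn).val = 0 := rfl
@[simp] theorem val_longSucc : (longSucc hn).val = n - 1 := rfl
@[simp] theorem val_shortSucc : (shortSucc hn).val = n - 3 := rfl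

@[simp] theorem height_longSucc : height (longSucc hn) = n - 2 := by simp [height]

@[simp] theorem height_shortSucc : height (shortSucc hn) = n - 3 :=
  height_of_le (val_shortSucc hn).le

theorem height_eq_zero_iff {v : Fin n} : height v = 0 ↔ v.val = 0 := by
  unfold height
  split_ifs <;> omega

theorem isWalk_iterate_down {v : Fin n} {j : ℕ} (hj : j ≤ height v) :
    IsWalk (FAdj n) j (fun i => down^[i] v) := by
  intro i hi
  refine fAdj_iff.mpr (Or.inr ⟨fun h => ?_, Function.iterate_succ_apply' _ _ _⟩)
  have := height_iterate_down v i
  rw [(height_eq_zero_iff hn).mpr h] at this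
  omega

theorem iterate_down_height (v : Fin n) : down^[height v] v = hub hn :=
  Fin.ext ((height_eq_zero_iff hn).mp (by rw [height_iterate_down, Nat.sub_self]))

theorem iterate_down_longSucc {v : Fin n} (hv : v.val ≠ n - 3) :
    down^[n - 2 - height v] (longSucc hn) = v := by
  have hv' := v.isLt
  have hdown2 : (down^[2] (longSucc hn)).val = n - 4 := by
    simp only [Function.iterate_succ_apply', Function.iterate_zero_apply, val_down, longSucc]
    split_ifs <;> omega
  apply Fin.ext
  by_cases hv1 : v.val = n - 1
  · simp [height, hv1, longSucc]
  by_cases hv2 : v.val = n - 2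
  · rw [show n - 2 - height v = 1 by rw [height, if_neg hv1, if_pos hv2]; omega]
    simp only [Function.iterate_one, val_down, longSucc]
    split_ifs <;> omega
  rw [show n - 2 - height v = n - 4 - v.val + 2 by rw [height, if_neg hv1, if_neg hv2]; omega,
    Function.iterate_add_apply, val_iterate_down_of_le (by omega), hdown2]
  omega

theorem iterate_down_shortSucc {v : Fin n} (hv : v.val ≤ n - 3) :
    down^[n - 3 - v.val] (shortSucc hn) = v :=
  Fin.ext (by rw [val_iterate_down_of_le le_rfl]; simp [shortSucc]; omega)

theorem coprime_cycle_lengths : (n - 1).Coprime (n - 2) := by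
  rw [show n - 1 = n - 2 + 1 by omega]
  exact Nat.coprime_self_add_left.mpr (Nat.coprime_one_left _)

theorem cycle_lengths_mul :
    (n - 1) * (n - 2) + 3 * n = n ^ 2 + 2 ∧ 4 * (n - 1) ≤ (n - 1) * (n - 2) := by
  refine ⟨?_, by rw [mul_comm 4]; exact Nat.mul_le_mul_left _ (by omega)⟩
  obtain ⟨m, rfl⟩ := Nat.exists_eq_add_of_le hn
  simp only [show 6 + m - 1 = m + 5 by omega, show 6 + m - 2 = m + 4 by omega]
  ring

theorem not_add_mul_eq_frobenius (a b : ℕ) :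
    a * (n - 1) + b * (n - 2) ≠ (n - 1) * (n - 2) - (n - 1) - (n - 2) := by
  have := (frobeniusNumber_iff.mp (frobeniusNumber_pair (coprime_cycle_lengths hn)
    (by omega) (by omega))).1
  simp only [AddSubmonoid.mem_closure_pair, smul_eq_mul, not_exists] at this
  exact this a b

theorem exists_add_mul_eq_of_frobenius_lt {x : ℕ}
    (hx : (n - 1) * (n - 2) - (n - 1) - (n - 2) < x) : ∃ a b, a * (n - 1) + b * (n - 2) = x := by
  have := (frobeniusNumber_iff.mp (frobeniusNumber_pair (coprime_cycle_lengths hn)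
    (by omega) (by omega))).2 x hx
  simpa only [AddSubmonoid.mem_closure_pair, smul_eq_mul] using this

theorem val_eq_sub_one_of_fAdj {a b : Fin n} (h : FAdj n a b) (hb : b.val = n - 2) :
    a.val = n - 1 := by
  unfold FAdj at h
  omega

end

/-- Summed along a walk, this counts how often the walk leaves `v₁` along the long cycle and how
often along the short one. -/
def hubType (a b : Fin n) : ℕ × ℕ :=
  if a.val = 0 then if b.val = n - 1 then (1, 0) else (0, 1) else (0, 0)

def hubCount (t : ℕ) (f : ℕ → Fin n) : ℕ × ℕ := ∑ i ∈ range t, hubType (f i) (f (i + 1))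

theorem val_eq_zero_of_fAdj {a b : Fin n} (h : FAdj n a b) (hb : b.val = n - 1) : a.val = 0 := by
  unfold FAdj at h
  omega

section
variable (hn : 6 ≤ n)
include hn

theorem height_add_hubCount {t : ℕ} {f : ℕ → Fin n} (hf : IsWalk (FAdj n) t f) :
    height (f 0) + ((hubCount t f).1 * (n - 1) + (hubCount t f).2 * (n - 2)) =
      t + height (f t) := by
  have := hf.height_add_sum height
    (fun a b => (hubType a b).1 * (n - 1) + (hubType a b).2 * (n - 2)) fun a b hab => ?_
  · rwa [sum_add_distrib, ← sum_mul, ← sum_mul, ← Prod.fst_sum, ← Prod.snd_sum] at this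
  rcases fAdj_iff.mp hab with ⟨ha, hb | hb⟩ | ⟨ha, rfl⟩
  · simp only [hubType, height, ha, hb, if_true]
    split_ifs <;> omega
  · simp only [hubType, height, ha, hb, if_true]
    split_ifs <;> omega
  · have := height_down a
    have : height a ≠ 0 := fun h => ha ((height_eq_zero_iff hn).mp h)
    simp only [hubType, ha, if_false]
    omega

theorem one_le_hubCount_fst {t : ℕ} {f : ℕ → Fin n} (hf : IsWalk (FAdj n) t f) (ht : 2 ≤ t)
    (hft : (f t).val = n - 2) : 1 ≤ (hubCount t f).1 := by
  have h1 : (f (t - 1)).val = n - 1 := val_eq_sub_one_of_fAdj hn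
    (by simpa [show t - 1 + 1 = t by omega] using hf (t - 1) (by omega)) hft
  have h0 : (f (t - 2)).val = 0 := val_eq_zero_of_fAdj
    (by simpa [show t - 2 + 1 = t - 1 by omega] using hf (t - 2) (by omega)) h1
  have hle := single_le_sum (f := fun i => (hubType (f i) (f (i + 1))).1) (fun _ _ => Nat.zero_le _)
    (mem_range.mpr (by omega : t - 2 < t))
  rw [show t - 2 + 1 = t - 1 by omega] at hle
  simp only [hubType, h0, h1, if_true] at hle
  rw [hubCount, Prod.fst_sum]
  exact hle

end

variable (S : SignedDigraph (Fin n))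

def potential (v : Fin n) : ℤ := S.walkSign (height v) (fun i => down^[i] v)

theorem sgn_mul_potential_down {v : Fin n} (hv : height v ≠ 0) :
    S.sgn v (down v) * potential S (down v) = potential S v := by
  have hh : height v = height (down v) + 1 := by rw [height_down]; omega
  simp only [potential, walkSign, hh, prod_range_succ', Function.iterate_succ_apply,
    Function.iterate_zero_apply]
  ring

section
variable (hn : 6 ≤ n)
include hn

def longSign : ℤ := S.sgn (hub hn) (longSucc hn) * potential S (longSucc hn)
def shortSign : ℤ := S.sgn (hub hn) (shortSucc hn) * potential S (shortSucc hn)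

theorem potential_hub : potential S (hub hn) = 1 := by
  simp [potential, (height_eq_zero_iff hn).mpr (show (hub hn).val = 0 from rfl),
    walkSign]

variable {S} (hadj : S.Adj = FAdj n)
include hadj

theorem walkSign_mul_potential {t : ℕ} {f : ℕ → Fin n} (hf : IsWalk S.Adj t f) :
    S.walkSign t f * potential S (f t) = potential S (f 0) *
      (longSign S hn ^ (hubCount t f).1 * shortSign S hn ^ (hubCount t f).2) := by
  have := S.walkSign_mul_eq_mul_prod (potential S)
    (fun a b => longSign S hn ^ (hubType a b).1 * shortSign S hn ^ (hubType a b).2)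
    (fun a b hab => ?_) hf
  · rwa [prod_mul_distrib, prod_pow_eq_pow_sum, prod_pow_eq_pow_sum, ← Prod.fst_sum,
      ← Prod.snd_sum] at this
  rw [hadj] at hab
  rcases fAdj_iff.mp hab with ⟨ha, hb | hb⟩ | ⟨ha, rfl⟩
  · obtain rfl : a = hub hn := Fin.ext ha
    obtain rfl : b = longSucc hn := Fin.ext hb
    rw [potential_hub S hn, one_mul]
    simp [hubType, hub, longSucc, longSign]
  · obtain rfl : a = hub hn := Fin.ext ha
    obtain rfl : b = shortSucc hn := Fin.ext hb
    rw [potential_hub S hn, one_mul]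
    simp [hubType, hub, shortSucc, shortSign, show n - 3 ≠ n - 1 by omega]
  · simp only [hubType, ha, if_false, pow_zero, mul_one]
    exact sgn_mul_potential_down S fun h => ha ((height_eq_zero_iff hn).mp h)

theorem hasSignedWalk_potential (v : Fin n) :
    S.HasSignedWalk (height v) v (hub hn) (potential S v) :=
  ⟨_, rfl, iterate_down_height hn v, hadj ▸ isWalk_iterate_down hn le_rfl, rfl⟩

theorem exists_hasSignedWalk_iterate_down {v : Fin n} {j : ℕ} (hj : j ≤ height v) :
    ∃ s, S.HasSignedWalk j v (down^[j] v) s :=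
  ⟨_, _, rfl, rfl, hadj ▸ isWalk_iterate_down hn hj, rfl⟩

theorem hasSignedWalk_longCycle : S.HasSignedWalk (n - 1) (hub hn) (hub hn) (longSign S hn) := by
  have harc : S.Adj (hub hn) (longSucc hn) := hadj ▸ fAdj_iff.mpr (Or.inl ⟨rfl, Or.inl rfl⟩)
  have := (hasSignedWalk_single harc).trans (hasSignedWalk_potential hn hadj (longSucc hn))
  rwa [height_longSucc, show 1 + (n - 2) = n - 1 by omega] at this

theorem hasSignedWalk_shortCycle : S.HasSignedWalk (n - 2) (hub hn) (hub hn) (shortSign S hn) := by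
  have harc : S.Adj (hub hn) (shortSucc hn) := hadj ▸ fAdj_iff.mpr (Or.inl ⟨rfl, Or.inr rfl⟩)
  have := (hasSignedWalk_single harc).trans (hasSignedWalk_potential hn hadj (shortSucc hn))
  rwa [height_shortSucc, show 1 + (n - 3) = n - 2 by omega] at this

theorem hasSignedWalk_hub (N M : ℕ) :
    S.HasSignedWalk (N * (n - 1) + M * (n - 2)) (hub hn) (hub hn)
      (longSign S hn ^ N * shortSign S hn ^ M) :=
  ((hasSignedWalk_longCycle hn hadj).pow N).trans ((hasSignedWalk_shortCycle hn hadj).pow M)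

theorem longSign_pow_ne (hpn : S.IsPrimitiveNonpowerful) :
    longSign S hn ^ (n - 2) ≠ shortSign S hn ^ (n - 1) := by
  intro hpow
  obtain ⟨l, -, hl⟩ := hpn
  obtain ⟨f, g, ⟨hf0, hfl, hf⟩, ⟨hg0, hgl, hg⟩, hne⟩ := hl l le_rfl (hub hn) (hub hn)
  have hsf := walkSign_mul_potential hn hadj hf
  have hsg := walkSign_mul_potential hn hadj hg
  have hlf := height_add_hubCount hn (hadj ▸ hf)
  have hlg := height_add_hubCount hn (hadj ▸ hg)
  rw [hf0, hfl, potential_hub, mul_one, one_mul] at hsf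
  rw [hg0, hgl, potential_hub, mul_one, one_mul] at hsg
  rw [hf0, hfl] at hlf
  rw [hg0, hgl] at hlg
  apply hne
  rw [hsf, hsg]
  exact pow_mul_pow_eq_of_add_mul_eq (coprime_cycle_lengths hn) (by omega) hpow (by omega)

theorem not_hasSSSD_height_add (u : Fin n) :
    ¬ S.HasSSSD (height u + (2 * n ^ 2 - 8 * n + 9)) u ⟨n - 2, by omega⟩ := by
  set t₀ := height u + (2 * n ^ 2 - 8 * n + 9)
  rintro ⟨f, g, ⟨hf0, hft, hf⟩, ⟨hg0, hgt, hg⟩, hne⟩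
  have hn2 : height (⟨n - 2, by omega⟩ : Fin n) = n - 3 := by simp [height]; omega
  have harith := cycle_lengths_mul hn
  have hlf := height_add_hubCount hn (hadj ▸ hf)
  have hlg := height_add_hubCount hn (hadj ▸ hg)
  rw [hf0, hft, hn2] at hlf
  rw [hg0, hgt, hn2] at hlg
  obtain ⟨hN, hM⟩ := Nat.eq_of_add_mul_eq_of_forall_ne (coprime_cycle_lengths hn) (by omega)
    (by omega : (hubCount t₀ f).1 * (n - 1) + (hubCount t₀ f).2 * (n - 2) =
      (hubCount t₀ g).1 * (n - 1) + (hubCount t₀ g).2 * (n - 2))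
    (one_le_hubCount_fst hn (hadj ▸ hf) (by omega) (by rw [hft]))
    (one_le_hubCount_fst hn (hadj ▸ hg) (by omega) (by rw [hgt]))
    fun a b h => not_add_mul_eq_frobenius hn a b (by omega)
  have hsf := walkSign_mul_potential hn hadj hf
  have hsg := walkSign_mul_potential hn hadj hg
  rw [hf0, hft] at hsf
  rw [hg0, hgt, ← hN, ← hM, ← hsf] at hsg
  exact hne (mul_right_cancel₀
    ((hasSignedWalk_potential hn hadj ⟨n - 2, by omega⟩).isUnit.ne_zero) hsg.symm)

theorem exists_hasSignedWalk_hub_long {v : Fin n} (hv : v.val ≠ n - 3) {N M b : ℕ}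
    (hb : b + height v = (N + 1) * (n - 1) + M * (n - 2)) :
    ∃ s, S.HasSignedWalk b (hub hn) v s := by
  have harc : S.Adj (hub hn) (longSucc hn) := hadj ▸ fAdj_iff.mpr (Or.inl ⟨rfl, Or.inl rfl⟩)
  have hh : height v ≤ n - 2 := by unfold height; split_ifs <;> omega
  obtain ⟨s, hs⟩ := exists_hasSignedWalk_iterate_down hn hadj (v := longSucc hn)
    (j := n - 2 - height v) (by rw [height_longSucc]; omega)
  rw [iterate_down_longSucc hn hv] at hs
  rw [show b = N * (n - 1) + M * (n - 2) + 1 + (n - 2 - height v) by rw [add_mul] at hb; omega]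
  exact ⟨_, ((hasSignedWalk_hub hn hadj N M).trans (hasSignedWalk_single harc)).trans hs⟩

theorem exists_hasSignedWalk_hub_short {v : Fin n} (hv : v.val ≤ n - 3) {N M b : ℕ}
    (hb : b + height v = N * (n - 1) + (M + 1) * (n - 2)) :
    ∃ s, S.HasSignedWalk b (hub hn) v s := by
  have harc : S.Adj (hub hn) (shortSucc hn) :=
    hadj ▸ fAdj_iff.mpr (Or.inl ⟨rfl, Or.inr rfl⟩)
  obtain ⟨s, hs⟩ := exists_hasSignedWalk_iterate_down hn hadj (v := shortSucc hn)
    (j := n - 3 - v.val) (by rw [height_shortSucc]; omega)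
  rw [iterate_down_shortSucc hn hv] at hs
  rw [height_of_le hv] at hb
  rw [show b = N * (n - 1) + M * (n - 2) + 1 + (n - 3 - v.val) by rw [add_mul] at hb; omega]
  exact ⟨_, ((hasSignedWalk_hub hn hadj N M).trans (hasSignedWalk_single harc)).trans hs⟩

theorem exists_hasSignedWalk_from_hub {b : ℕ}
    (hb : (n - 1) * (n - 2) - (n - 1) - (n - 2) + 3 ≤ b) (v : Fin n) :
    ∃ s, S.HasSignedWalk b (hub hn) v s := by
  have hv := v.isLt
  have harith := cycle_lengths_mul hn
  by_cases hlong : n - 2 ≤ v.val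
  · have hh : n - 3 ≤ height v := by unfold height; split_ifs <;> omega
    obtain ⟨N, M, hNM⟩ := exists_add_mul_eq_of_frobenius_lt hn
      (x := b + height v - (n - 1)) (by omega)
    exact exists_hasSignedWalk_hub_long hn hadj (by omega) (N := N) (M := M)
      (by rw [add_mul, one_mul]; omega)
  have hheight := height_of_le (v := v) (by omega)
  by_cases hshort : v.val = n - 3
  · obtain ⟨N, M, hNM⟩ := exists_add_mul_eq_of_frobenius_lt hn
      (x := b + height v - (n - 2)) (by omega)
    exact exists_hasSignedWalk_hub_short hn hadj (by omega) (N := N) (M := M)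
      (by rw [add_mul, one_mul]; omega)
  obtain ⟨N, M, hNM⟩ := exists_add_mul_eq_of_frobenius_lt hn (x := b + height v) (by omega)
  rcases N with _ | N
  · rcases M with _ | M
    · omega
    exact exists_hasSignedWalk_hub_short hn hadj (by omega) hNM.symm
  · exact exists_hasSignedWalk_hub_long hn hadj (by omega) hNM.symm

theorem hasSSSD_of_height_add_le (hpow : longSign S hn ^ (n - 2) ≠ shortSign S hn ^ (n - 1))
    {u : Fin n} {t : ℕ} (ht : height u + (2 * n ^ 2 - 8 * n + 10) ≤ t) (v : Fin n) :
    S.HasSSSD t u v := by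
  have harith := cycle_lengths_mul hn
  obtain ⟨s, hs⟩ := exists_hasSignedWalk_from_hub hn hadj
    (b := t - height u - (n - 1) * (n - 2)) (by omega) v
  have := (hasSignedWalk_potential hn hadj u).trans_hasSSSD
    ((hasSSSD_of_pow_ne (hasSignedWalk_longCycle hn hadj) (hasSignedWalk_shortCycle hn hadj)
      hpow).trans_hasSignedWalk hs)
  rwa [show height u + ((n - 1) * (n - 2) + (t - height u - (n - 1) * (n - 2))) = t by omega]
    at this

theorem localBase_eq (hpn : S.IsPrimitiveNonpowerful) (u : Fin n) :
    S.localBase u = height u + (2 * n ^ 2 - 8 * n + 10) := by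
  have harith := cycle_lengths_mul hn
  rw [S.localBase_eq_succ (fun t ht v => hasSSSD_of_height_add_le hn hadj
    (longSign_pow_ne hn hadj hpn) (by omega) v) (not_hasSSSD_height_add hn hadj u)]
  omega

end

end FDigraph

/-- Let `n ≥ 6` and let `𝒮₀` be a primitive nonpowerful signed
digraph with underlying digraph `F`, in which all cycles of length `n-1` have
the same sign and all cycles of length `n-2` have the same sign. Then
`l(k) = l(v_k) = 2n²-8n+9+k` for `1 ≤ k ≤ n-2` and
`l(k) = l(v_k) = 2n²-8n+8+k` for `n-1 ≤ k ≤ n`. -/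
theorem stmt4 (n : ℕ) (hn : 6 ≤ n)
    (S : SignedDigraph (Fin n)) (hadj : S.Adj = FAdj n)
    (hpn : S.IsPrimitiveNonpowerful) :
    (∀ k : ℕ, ∀ _hk1 : 1 ≤ k, ∀ _hk2 : k ≤ n - 2,
      kthSmallest S.localBase k = S.localBase ⟨k - 1, by omega⟩ ∧
      S.localBase ⟨k - 1, by omega⟩ = 2 * n ^ 2 - 8 * n + 9 + k) ∧
    (∀ k : ℕ, ∀ _hk1 : n - 1 ≤ k, ∀ _hk2 : k ≤ n,
      kthSmallest S.localBase k = S.localBase ⟨k - 1, by omega⟩ ∧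
      S.localBase ⟨k - 1, by omega⟩ = 2 * n ^ 2 - 8 * n + 8 + k) := by
  have hbase := FDigraph.localBase_eq hn hadj hpn
  have hmono : Monotone S.localBase := fun a b hab => by
    rw [hbase, hbase]
    exact Nat.add_le_add_right (FDigraph.height_monotone hab) _
  refine ⟨fun k hk1 hk2 => ⟨kthSmallest_of_monotone hmono hk1 (by omega), ?_⟩,
    fun k hk1 hk2 => ⟨kthSmallest_of_monotone hmono (by omega) hk2, ?_⟩⟩
  · rw [hbase, FDigraph.height_of_le (by simp only; omega)]
    simp only
    omega
  · rw [hbase]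
    simp only [FDigraph.height]
    split_ifs <;> omega
end
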